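/- Let W be an n×n row-stochastic nonnegative real matrix, Λ = diag(λ) with 0 ≤ λⁱ ≤ 1 for all i, and u ∈ ℝⁿ, and suppose ΛW is Schur stable, so the FJ system x_{t+1} = ΛW x_t + (I−Λ)u converges to x_∞ = (I − ΛW)⁻¹(I−Λ)u. Let (W_t), (Λ_t) be sequences of n×n real matrices with W_t → W and Λ_t → Λ entrywise as t → ∞, and let (u_t) be a sequence in ℝⁿ converging to u exponentially, i.e., there exist C > 0 and β ∈ (0,1) with ‖u_t − u‖ ≤ C β^t for all t. Then for every initial condition z₀ ∈ ℝⁿ, the time-varying system z_{t+1} = Λ_t W_t z_t + (I − Λ_t) u_t converges to x_∞. -/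

import Mathlib

/-!
Schur stability gives `A ^ k → 0` (Gelfand's formula), so `‖A ^ k‖ < 1` for some `k > 0`. Then
`ν v = ∑_{j<k} ‖A ^ j v‖` is equivalent to `‖·‖` and `ν (A v) + ‖v‖ = ν v + ‖A ^ k v‖`, so `A` is a
strict contraction for `ν`, and so is every operator close enough to `A`. Hence the error
`e_t = z_t - x_∞` eventually satisfies `ν e_{t+1} ≤ r ν e_t + ε_t` with `r < 1` and `ε_t → 0`
(the residual of `x_∞` in the perturbed step), which forces `e_t → 0`.
-/

open Filter Matrix Finset

/-- A square real matrix is Schur stable if every complex eigenvalue has modulus `< 1`. -/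
def SchurStable {n : ℕ} (A : Matrix (Fin n) (Fin n) ℝ) : Prop :=
  ∀ μ ∈ spectrum ℂ (A.map (Complex.ofReal)), ‖μ‖ < 1

open scoped Topology

theorem tendsto_zero_of_le_mul_add {a ε : ℕ → ℝ} {r : ℝ} (hr0 : 0 ≤ r) (hr1 : r < 1)
    (ha : ∀ t, 0 ≤ a t) (hε : Tendsto ε atTop (𝓝 0))
    (hrec : ∀ᶠ t in atTop, a (t + 1) ≤ r * a t + ε t) :
    Tendsto a atTop (𝓝 0) := by
  refine tendsto_order.2 ⟨fun δ hδ => .of_forall fun t => hδ.trans_le (ha t), fun δ hδ => ?_⟩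
  have hδ2 : 0 < δ / 2 := half_pos hδ
  obtain ⟨T, hT⟩ := (hrec.and (hε.eventually (gt_mem_nhds (mul_pos (sub_pos.2 hr1) hδ2))))
    |>.exists_forall_of_atTop
  have hdecay : ∀ m, a (T + m) ≤ r ^ m * a T + δ / 2 := by
    intro m
    induction m with
    | zero => simpa using hδ2.le
    | succ m ih =>
      obtain ⟨hstep, hsmall⟩ := hT (T + m) (Nat.le_add_right T m)
      calc a (T + (m + 1)) ≤ r * a (T + m) + ε (T + m) := hstep
        _ ≤ r * (r ^ m * a T + δ / 2) + (1 - r) * (δ / 2) := by gcongr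
        _ = r ^ (m + 1) * a T + δ / 2 := by ring
  have hgeom : Tendsto (fun m => r ^ m * a T) atTop (𝓝 0) := by
    simpa using (tendsto_pow_atTop_nhds_zero_of_lt_one hr0 hr1).mul_const (a T)
  obtain ⟨M, hM⟩ := eventually_atTop.1 (hgeom.eventually (gt_mem_nhds hδ2))
  refine eventually_atTop.2 ⟨T + M, fun t ht => ?_⟩
  obtain ⟨m, rfl⟩ := Nat.exists_eq_add_of_le (le_of_add_le_left ht)
  linarith [hdecay m, hM m (by omega)]

namespace ContinuousLinearMap

variable {𝕜 E : Type*} [NontriviallyNormedField 𝕜] [NormedAddCommGroup E] [NormedSpace 𝕜 E]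
variable (A : E →L[𝕜] E) (k : ℕ)

noncomputable def powNormSum (v : E) : ℝ := ∑ j ∈ range k, ‖(A ^ j) v‖

noncomputable def powNormSumBound : ℝ := 1 + ∑ j ∈ range k, ‖A ^ j‖

lemma one_le_powNormSumBound : 1 ≤ A.powNormSumBound k :=
  le_add_of_nonneg_right (sum_nonneg fun _ _ => norm_nonneg _)

lemma powNormSum_nonneg (v : E) : 0 ≤ A.powNormSum k v :=
  sum_nonneg fun _ _ => norm_nonneg _

lemma norm_le_powNormSum {k : ℕ} (hk : 0 < k) (v : E) : ‖v‖ ≤ A.powNormSum k v :=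
  calc ‖v‖ = ‖(A ^ 0) v‖ := by rw [pow_zero, one_apply_eq_self]
    _ ≤ A.powNormSum k v :=
      single_le_sum (f := fun j => ‖(A ^ j) v‖) (fun _ _ => norm_nonneg _) (mem_range.2 hk)

lemma powNormSum_le_mul_norm (v : E) : A.powNormSum k v ≤ A.powNormSumBound k * ‖v‖ :=
  calc A.powNormSum k v ≤ ∑ j ∈ range k, ‖A ^ j‖ * ‖v‖ :=
        sum_le_sum fun j _ => (A ^ j).le_opNorm v
    _ ≤ A.powNormSumBound k * ‖v‖ := by
        rw [← sum_mul, powNormSumBound]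
        exact mul_le_mul_of_nonneg_right (le_add_of_nonneg_left zero_le_one) (norm_nonneg v)

lemma powNormSum_add_le (v w : E) :
    A.powNormSum k (v + w) ≤ A.powNormSum k v + A.powNormSum k w := by
  simp only [powNormSum, map_add, ← sum_add_distrib]
  exact sum_le_sum fun _ _ => norm_add_le _ _

lemma powNormSum_apply_self (v : E) :
    A.powNormSum k (A v) + ‖v‖ = A.powNormSum k v + ‖(A ^ k) v‖ :=
  calc A.powNormSum k (A v) + ‖v‖ = ∑ j ∈ range k, ‖(A ^ (j + 1)) v‖ + ‖(A ^ 0) v‖ := by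
        simp only [powNormSum, pow_succ, mul_apply_eq_comp, pow_zero,
          one_apply_eq_self]
    _ = A.powNormSum k v + ‖(A ^ k) v‖ := by
        rw [← sum_range_succ' (fun j => ‖(A ^ j) v‖), sum_range_succ, powNormSum]

lemma powNormSum_apply_le {k : ℕ} (hk : 0 < k) (hAk : ‖A ^ k‖ ≤ 1) (B : E →L[𝕜] E) (v : E) :
    A.powNormSum k (B v) ≤
      (1 - (1 - ‖A ^ k‖) / A.powNormSumBound k + A.powNormSumBound k * ‖B - A‖) *
        A.powNormSum k v := by
  set C := A.powNormSumBound k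
  set ν := A.powNormSum k
  have hC : 0 < C := zero_lt_one.trans_le (A.one_le_powNormSumBound k)
  have hcontract : ν (A v) ≤ ν v - (1 - ‖A ^ k‖) * ‖v‖ := by
    linarith [A.powNormSum_apply_self k v, (A ^ k).le_opNorm v]
  have hlower : ν v / C ≤ ‖v‖ := div_le_of_le_mul₀ hC.le (norm_nonneg v) (by
    rw [mul_comm]; exact A.powNormSum_le_mul_norm k v)
  have hperturb : ν ((B - A) v) ≤ C * ‖B - A‖ * ν v :=
    calc ν ((B - A) v) ≤ C * ‖(B - A) v‖ := A.powNormSum_le_mul_norm k _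
      _ ≤ C * (‖B - A‖ * ν v) := by
        gcongr
        exact ((B - A).le_opNorm v).trans (by gcongr; exact A.norm_le_powNormSum hk v)
      _ = C * ‖B - A‖ * ν v := by ring
  calc ν (B v) = ν (A v + (B - A) v) := by rw [_root_.sub_apply, add_sub_cancel]
    _ ≤ ν v - (1 - ‖A ^ k‖) * ‖v‖ + C * ‖B - A‖ * ν v :=
        (A.powNormSum_add_le k _ _).trans (add_le_add hcontract hperturb)
    _ ≤ ν v - (1 - ‖A ^ k‖) * (ν v / C) + C * ‖B - A‖ * ν v := by
        gcongr
    _ = _ := by ring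

theorem tendsto_of_perturbed_affine_recurrence {A : E →L[𝕜] E}
    (hA : Tendsto (A ^ ·) atTop (𝓝 0)) {At : ℕ → E →L[𝕜] E} (hAt : Tendsto At atTop (𝓝 A))
    {b : E} {bt : ℕ → E} (hbt : Tendsto bt atTop (𝓝 b)) {x : E} (hx : A x + b = x)
    {z : ℕ → E} (hz : ∀ t, z (t + 1) = At t (z t) + bt t) :
    Tendsto z atTop (𝓝 x) := by
  obtain ⟨k, hk, hAk⟩ : ∃ k, 0 < k ∧ ‖A ^ k‖ < 1 :=
    ((eventually_gt_atTop 0).and (hA.norm.eventually (gt_mem_nhds (by simp)))).exists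
  set C := A.powNormSumBound k
  set ν := A.powNormSum k
  set r := 1 - (1 - ‖A ^ k‖) / C
  have hC : 1 ≤ C := A.one_le_powNormSumBound k
  have hr0 : 0 ≤ r :=
    sub_nonneg.2 (div_le_one_of_le₀ (by linarith [norm_nonneg (A ^ k)]) (by linarith))
  have hr1 : r < 1 := sub_lt_self _ (div_pos (by linarith) (by linarith))
  have hfactor : ∀ᶠ t in atTop, r + C * ‖At t - A‖ ≤ (1 + r) / 2 := by
    have : Tendsto (fun t => r + C * ‖At t - A‖) atTop (𝓝 r) := by
      simpa using ((tendsto_iff_norm_sub_tendsto_zero.1 hAt).const_mul C).const_add r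
    exact (this.eventually (gt_mem_nhds (by linarith))).mono fun _ => le_of_lt
  have hresidual : Tendsto (fun t => C * ‖At t x + bt t - x‖) atTop (𝓝 0) := by
    have : Tendsto (fun t => At t x + bt t - x) atTop (𝓝 (A x + b - x)) :=
      ((((apply 𝕜 E x).continuous.tendsto A).comp hAt).add hbt).sub_const x
    simpa [hx] using (this.norm.const_mul C)
  have hrec : ∀ᶠ t in atTop,
      ν (z (t + 1) - x) ≤ (1 + r) / 2 * ν (z t - x) + C * ‖At t x + bt t - x‖ := by
    filter_upwards [hfactor] with t ht
    have herr : z (t + 1) - x = At t (z t - x) + (At t x + bt t - x) := by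
      rw [hz, map_sub]; abel
    calc ν (z (t + 1) - x) ≤ ν (At t (z t - x)) + ν (At t x + bt t - x) := by
          rw [herr]; exact A.powNormSum_add_le k _ _
      _ ≤ (r + C * ‖At t - A‖) * ν (z t - x) + C * ‖At t x + bt t - x‖ := by
          gcongr
          · exact A.powNormSum_apply_le hk hAk.le (At t) (z t - x)
          · exact A.powNormSum_le_mul_norm k _
      _ ≤ (1 + r) / 2 * ν (z t - x) + C * ‖At t x + bt t - x‖ := by
          gcongr
          exact A.powNormSum_nonneg k _
  have hν : Tendsto (fun t => ν (z t - x)) atTop (𝓝 0) :=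
    tendsto_zero_of_le_mul_add (by linarith) (by linarith) (fun t => A.powNormSum_nonneg k _)
      hresidual hrec
  exact tendsto_iff_norm_sub_tendsto_zero.2 <| squeeze_zero (fun t => norm_nonneg _)
    (fun t => A.norm_le_powNormSum hk _) hν

end ContinuousLinearMap

theorem tendsto_of_sqrt_sum_sq_sub_le {α ι : Type*} [Fintype ι] {l : Filter α}
    {f : α → ι → ℝ} {g : ι → ℝ} {δ : α → ℝ} (hδ : Tendsto δ l (𝓝 0))
    (hfg : ∀ a, √(∑ i, (f a i - g i) ^ 2) ≤ δ a) : Tendsto f l (𝓝 g) :=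
  tendsto_pi_nhds.2 fun i => tendsto_iff_norm_sub_tendsto_zero.2 <|
    squeeze_zero (fun _ => norm_nonneg _) (fun a => (Real.abs_le_sqrt <|
      single_le_sum (f := fun i => (f a i - g i) ^ 2) (fun _ _ => sq_nonneg _) (mem_univ i)).trans
        (hfg a)) hδ

theorem tendsto_pow_nhds_zero_of_spectralRadius_lt_one {𝔸 : Type*} [NormedRing 𝔸]
    [NormedAlgebra ℂ 𝔸] [CompleteSpace 𝔸] {a : 𝔸} (ha : spectralRadius ℂ a < 1) :
    Tendsto (a ^ ·) atTop (𝓝 0) := by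
  obtain ⟨s, hρs, hs1⟩ := ENNReal.lt_iff_exists_nnreal_btwn.1 ha
  have hbound : ∀ᶠ k in atTop, ‖a ^ k‖ ≤ (s : ℝ) ^ k := by
    filter_upwards [(spectrum.pow_norm_pow_one_div_tendsto_nhds_spectralRadius a).eventually
      (gt_mem_nhds hρs), eventually_gt_atTop 0] with k hk hk0
    rw [ENNReal.ofReal_lt_coe_iff (by positivity), one_div] at hk
    exact_mod_cast ((Real.rpow_inv_lt_iff_of_pos (norm_nonneg _) s.2 (Nat.cast_pos.2 hk0)).1 hk).le
  exact squeeze_zero_norm' hbound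
    (tendsto_pow_atTop_nhds_zero_of_lt_one s.2 (by exact_mod_cast hs1))

namespace SchurStable

variable {n : ℕ} {A : Matrix (Fin n) (Fin n) ℝ}

theorem spectralRadius_lt_one (hA : SchurStable A) :
    spectralRadius ℂ (A.map Complex.ofReal) < 1 := by
  let : NormedRing (Matrix (Fin n) (Fin n) ℂ) := Matrix.linftyOpNormedRing
  let : NormedAlgebra ℂ (Matrix (Fin n) (Fin n) ℂ) := Matrix.linftyOpNormedAlgebra
  rcases (spectrum ℂ (A.map Complex.ofReal)).eq_empty_or_nonempty with h | h
  · simp [spectralRadius, h]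
  · exact_mod_cast spectrum.spectralRadius_lt_of_forall_lt_of_nonempty h (r := 1)
      fun z hz => by simpa [← NNReal.coe_lt_coe] using hA z hz

theorem tendsto_pow (hA : SchurStable A) : Tendsto (A ^ ·) atTop (𝓝 0) := by
  let : NormedRing (Matrix (Fin n) (Fin n) ℂ) := Matrix.linftyOpNormedRing
  let : NormedAlgebra ℂ (Matrix (Fin n) (Fin n) ℂ) := Matrix.linftyOpNormedAlgebra
  have hB := tendsto_pow_nhds_zero_of_spectralRadius_lt_one hA.spectralRadius_lt_one
  refine tendsto_pi_nhds.2 fun i => tendsto_pi_nhds.2 fun j => ?_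
  have hentry : ∀ k, ((A.map Complex.ofReal) ^ k) i j = ((A ^ k) i j : ℂ) := fun k =>
    (congrFun₂ (Matrix.map_pow A Complex.ofRealHom k) i j).symm
  simpa [hentry, Function.comp_def] using
    (Complex.continuous_re.tendsto _).comp ((hB.apply_nhds i).apply_nhds j)

end SchurStable

namespace Matrix

variable {ι 𝕜 : Type*} [Fintype ι] [DecidableEq ι] [NontriviallyNormedField 𝕜]

noncomputable def toContinuousLinearMapAlgEquiv [CompleteSpace 𝕜] :
    Matrix ι ι 𝕜 ≃ₐ[𝕜] ((ι → 𝕜) →L[𝕜] (ι → 𝕜)) :=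
  toLinAlgEquiv'.trans (Module.End.toContinuousLinearMap (ι → 𝕜))

lemma continuous_toContinuousLinearMapAlgEquiv [CompleteSpace 𝕜] :
    Continuous (toContinuousLinearMapAlgEquiv : Matrix ι ι 𝕜 ≃ₐ[𝕜] _) :=
  LinearMap.continuous_of_finiteDimensional
    (toContinuousLinearMapAlgEquiv : Matrix ι ι 𝕜 ≃ₐ[𝕜] _).toLinearMap

lemma isUnit_one_sub_of_tendsto_pow {A : Matrix ι ι 𝕜} (hA : Tendsto (A ^ ·) atTop (𝓝 0)) :
    IsUnit (1 - A) := by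
  refine mulVec_injective_iff_isUnit.1 fun v w hvw => sub_eq_zero.1 ?_
  set d := v - w
  have hfix : A *ᵥ d = d := by
    rw [sub_mulVec, sub_mulVec, one_mulVec, one_mulVec] at hvw
    rw [mulVec_sub]; exact (sub_eq_sub_iff_sub_eq_sub.1 hvw).symm
  have hpow : ∀ k, (A ^ k) *ᵥ d = d := fun k => by
    induction k with
    | zero => rw [pow_zero, one_mulVec]
    | succ k ih => rw [pow_succ, ← mulVec_mulVec, hfix, ih]
  have hlim : Tendsto (fun k => (A ^ k) *ᵥ d) atTop (𝓝 ((0 : Matrix ι ι 𝕜) *ᵥ d)) :=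
    ((continuous_id.matrix_mulVec continuous_const).tendsto _).comp hA
  simp only [hpow, zero_mulVec] at hlim
  exact tendsto_nhds_unique tendsto_const_nhds hlim

lemma mulVec_nonsing_inv_one_sub_add {R : Type*} [CommRing R] {A : Matrix ι ι R}
    (hA : IsUnit (1 - A)) (b : ι → R) : A *ᵥ ((1 - A)⁻¹ *ᵥ b) + b = (1 - A)⁻¹ *ᵥ b := by
  have hsolve : (1 - A) *ᵥ ((1 - A)⁻¹ *ᵥ b) = b := by
    rw [mulVec_mulVec, mul_nonsing_inv _ ((isUnit_iff_isUnit_det _).1 hA), one_mulVec]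
  rw [sub_mulVec, one_mulVec] at hsolve
  exact eq_sub_iff_add_eq'.1 hsolve.symm

end Matrix

theorem fj_time_varying_stability_general {n : ℕ}
    (W : Matrix (Fin n) (Fin n) ℝ) (lam : Fin n → ℝ) (u : Fin n → ℝ)
    (hschur : SchurStable (Matrix.diagonal lam * W))
    (Wt Λt : ℕ → Matrix (Fin n) (Fin n) ℝ) (ut : ℕ → Fin n → ℝ)
    (hWt : ∀ i j, Tendsto (fun t => Wt t i j) atTop (nhds (W i j)))
    (hΛt : ∀ i j, Tendsto (fun t => Λt t i j) atTop (nhds ((Matrix.diagonal lam) i j)))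
    (hut : ∃ C > (0 : ℝ), ∃ β ∈ Set.Ioo (0 : ℝ) 1,
      ∀ t, Real.sqrt (∑ i, (ut t i - u i) ^ 2) ≤ C * β ^ t)
    (z : ℕ → Fin n → ℝ)
    (hz : ∀ t, z (t + 1) = (Λt t * Wt t) *ᵥ z t + (1 - Λt t) *ᵥ ut t) :
    Tendsto z atTop
      (nhds ((1 - Matrix.diagonal lam * W)⁻¹ *ᵥ ((1 - Matrix.diagonal lam) *ᵥ u))) := by
  set A := Matrix.diagonal lam * W
  set T := (Matrix.toContinuousLinearMapAlgEquiv : Matrix (Fin n) (Fin n) ℝ ≃ₐ[ℝ] _)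
  have hT := (Matrix.continuous_toContinuousLinearMapAlgEquiv (𝕜 := ℝ) (ι := Fin n)).tendsto
  have hpow : Tendsto (A ^ ·) atTop (𝓝 0) := hschur.tendsto_pow
  set b := (1 - diagonal lam) *ᵥ u
  have hΛ : Tendsto Λt atTop (𝓝 (diagonal lam)) :=
    tendsto_pi_nhds.2 fun i => tendsto_pi_nhds.2 (hΛt i)
  have hAt : Tendsto (fun t => Λt t * Wt t) atTop (𝓝 A) :=
    hΛ.mul (tendsto_pi_nhds.2 fun i => tendsto_pi_nhds.2 (hWt i))
  have hu : Tendsto ut atTop (𝓝 u) := by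
    obtain ⟨C, -, β, hβ, hbound⟩ := hut
    exact tendsto_of_sqrt_sum_sq_sub_le (by
      simpa using (tendsto_pow_atTop_nhds_zero_of_lt_one hβ.1.le hβ.2).const_mul C) hbound
  have hbt : Tendsto (fun t => (1 - Λt t) *ᵥ ut t) atTop (𝓝 b) :=
    ((continuous_fst.matrix_mulVec continuous_snd).tendsto _).comp
      ((tendsto_const_nhds.sub hΛ).prodMk_nhds hu)
  refine ContinuousLinearMap.tendsto_of_perturbed_affine_recurrence (A := T A)
    (At := fun t => T (Λt t * Wt t)) ?_ ((hT A).comp hAt) hbt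
    (mulVec_nonsing_inv_one_sub_add (isUnit_one_sub_of_tendsto_pow hpow) b) hz
  simpa [T, Function.comp_def, map_pow] using (hT 0).comp hpow

/-- Stability of the Friedkin-Johnsen system is preserved when the influence structure,
susceptibilities and external biases become time-varying sequences converging to the original
parameters (the biases converging exponentially): the perturbed system converges to the same
limit `x_∞ = (I - ΛW)⁻¹ (I - Λ) u` for every initial condition. -/
theorem fj_time_varying_stability {n : ℕ}
    (W : Matrix (Fin n) (Fin n) ℝ) (lam : Fin n → ℝ) (u : Fin n → ℝ)
    (hW0 : ∀ i j, 0 ≤ W i j) (hW1 : ∀ i, ∑ j, W i j = 1)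
    (hlam : ∀ i, 0 ≤ lam i ∧ lam i ≤ 1)
    (hschur : SchurStable (Matrix.diagonal lam * W))
    (Wt Λt : ℕ → Matrix (Fin n) (Fin n) ℝ) (ut : ℕ → Fin n → ℝ)
    (hWt : ∀ i j, Tendsto (fun t => Wt t i j) atTop (nhds (W i j)))
    (hΛt : ∀ i j, Tendsto (fun t => Λt t i j) atTop (nhds ((Matrix.diagonal lam) i j)))
    (hut : ∃ C > (0 : ℝ), ∃ β ∈ Set.Ioo (0 : ℝ) 1,
      ∀ t, Real.sqrt (∑ i, (ut t i - u i) ^ 2) ≤ C * β ^ t)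
    (z : ℕ → Fin n → ℝ)
    (hz : ∀ t, z (t + 1) = (Λt t * Wt t) *ᵥ z t + (1 - Λt t) *ᵥ ut t) :
    Tendsto z atTop
      (nhds ((1 - Matrix.diagonal lam * W)⁻¹ *ᵥ ((1 - Matrix.diagonal lam) *ᵥ u))) :=
  fj_time_varying_stability_general W lam u hschur Wt Λt ut hWt hΛt hut z hz
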